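/- Let s' be obtained from s by flipping vertex k and then vertex j with j ≠ k and j not adjacent to k. Then the total change in cut value is chg_s(k) + chg_s(j); i.e., the effects of flips at non-adjacent vertices are additive. -/

import Mathlib

open Finset

variable {V : Type*}

/-- Bool-valued predicate: the two endpoints of an unordered pair get the same sign. -/
def sameShore (s : V → ℤ) : Sym2 V → Bool :=
  Sym2.lift ⟨fun u v => decide (s u = s v), fun u v => by simp [eq_comm]⟩

/-- Cut value of a shore assignment `s` with integer edge weights `w`. -/
def cutZ [Fintype V] (G : SimpleGraph V) [DecidableRel G.Adj]
    (w : Sym2 V → ℤ) (s : V → ℤ) : ℤ :=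
  ∑ e ∈ G.edgeFinset, if sameShore s e then 0 else w e

/-- The change in cut value caused by flipping vertex `k`. -/
def chgZ [Fintype V] [DecidableEq V] (G : SimpleGraph V) [DecidableRel G.Adj]
    (w : Sym2 V → ℤ) (s : V → ℤ) (k : V) : ℤ :=
  ∑ v ∈ G.neighborFinset k, w (Sym2.mk k v) * (if s k = s v then 1 else -1)

lemma filter_eq_image [Fintype V] [DecidableEq V] (G : SimpleGraph V)
    [DecidableRel G.Adj] (k : V) :
    {e ∈ G.edgeFinset | k ∈ e} = (G.neighborFinset k).image (fun v => s(k, v)) := by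
  ext e
  induction e with
  | _ a b =>
    simp only [mem_filter, SimpleGraph.mem_edgeFinset, SimpleGraph.mem_edgeSet,
      Sym2.mem_iff, mem_image, SimpleGraph.mem_neighborFinset]
    constructor
    · rintro ⟨hab, rfl | rfl⟩
      · exact ⟨b, hab, rfl⟩
      · exact ⟨a, hab.symm, Sym2.eq_swap⟩
    · rintro ⟨v, hv, hve⟩
      rw [Sym2.eq_iff] at hve
      rcases hve with ⟨rfl, rfl⟩ | ⟨rfl, rfl⟩
      · exact ⟨hv, Or.inl rfl⟩
      · exact ⟨hv.symm, Or.inr rfl⟩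

lemma flip_one [Fintype V] [DecidableEq V] (G : SimpleGraph V)
    [DecidableRel G.Adj] (w : Sym2 V → ℤ) (s : V → ℤ) (hs : ∀ v, s v = 1 ∨ s v = -1)
    (k : V) :
    cutZ G w (Function.update s k (-(s k))) = cutZ G w s + chgZ G w s k := by
  classical
  unfold cutZ chgZ
  rw [← Finset.sum_filter_add_sum_filter_not G.edgeFinset (k ∈ ·)
    (fun e => if sameShore (Function.update s k (-(s k))) e then 0 else w e),
    ← Finset.sum_filter_add_sum_filter_not G.edgeFinset (k ∈ ·)
    (fun e => if sameShore s e then 0 else w e)]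
  have hnon : ∑ e ∈ {e ∈ G.edgeFinset | ¬ k ∈ e},
      (if sameShore (Function.update s k (-(s k))) e then 0 else w e)
      = ∑ e ∈ {e ∈ G.edgeFinset | ¬ k ∈ e}, (if sameShore s e then 0 else w e) := by
    apply Finset.sum_congr rfl
    intro e he
    rw [mem_filter] at he
    induction e with
    | _ a b =>
      have ha : a ≠ k := fun h => he.2 (h ▸ Sym2.mem_mk_left a b)
      have hb : b ≠ k := fun h => he.2 (h ▸ Sym2.mem_mk_right a b)
      simp [sameShore, Function.update_of_ne ha, Function.update_of_ne hb]
  have hinj : ∀ x ∈ G.neighborFinset k, ∀ y ∈ G.neighborFinset k,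
      s(k, x) = s(k, y) → x = y := by
    intro x hx y hy hxy
    rw [Sym2.eq_iff] at hxy
    rcases hxy with ⟨-, rfl⟩ | ⟨rfl, rfl⟩ <;> rfl
  have hinc : ∑ e ∈ {e ∈ G.edgeFinset | k ∈ e},
      (if sameShore (Function.update s k (-(s k))) e then 0 else w e)
      = (∑ e ∈ {e ∈ G.edgeFinset | k ∈ e}, (if sameShore s e then 0 else w e))
        + ∑ v ∈ G.neighborFinset k, w s(k, v) * (if s k = s v then 1 else -1) := by
    rw [filter_eq_image, Finset.sum_image hinj, Finset.sum_image hinj,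
      ← Finset.sum_add_distrib]
    apply Finset.sum_congr rfl
    intro v hv
    rw [SimpleGraph.mem_neighborFinset] at hv
    have hvk : v ≠ k := fun h => G.loopless.irrefl k (h ▸ hv)
    have h1 : sameShore (Function.update s k (-(s k))) s(k, v)
        = decide (-(s k) = s v) := by
      simp [sameShore, Function.update_of_ne hvk]
    have h2 : sameShore s s(k, v) = decide (s k = s v) := by simp [sameShore]
    rw [h1, h2]
    rcases hs k with hk | hk <;> rcases hs v with hv' | hv' <;>
      simp [hk, hv']
  rw [hnon, hinc]
  ring

/-- Flips at distinct non-adjacent vertices have additive effect on the cut value. -/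
theorem flip_nonadjacent_additive [Fintype V] [DecidableEq V] (G : SimpleGraph V)
    [DecidableRel G.Adj] (w : Sym2 V → ℤ) (s : V → ℤ) (hs : ∀ v, s v = 1 ∨ s v = -1)
    (k j : V) (hjk : j ≠ k) (hadj : ¬ G.Adj j k) :
    cutZ G w (Function.update (Function.update s k (-(s k))) j
        (-(Function.update s k (-(s k)) j)))
      = cutZ G w s + chgZ G w s k + chgZ G w s j := by
  classical
  set s1 := Function.update s k (-(s k)) with hs1
  have hs1v : ∀ v, s1 v = 1 ∨ s1 v = -1 := by
    intro v
    by_cases h : v = k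
    · rw [hs1, h, Function.update_self]; rcases hs k with h' | h' <;> simp [h']
    · simp [hs1, Function.update_of_ne h]; exact hs v
  rw [flip_one G w s1 hs1v j, flip_one G w s hs k]
  have hchg : chgZ G w s1 j = chgZ G w s j := by
    unfold chgZ
    apply Finset.sum_congr rfl
    intro v hv
    rw [SimpleGraph.mem_neighborFinset] at hv
    have hvk : v ≠ k := fun h => hadj (h ▸ hv)
    rw [hs1, Function.update_of_ne hjk, Function.update_of_ne hvk]
  rw [hchg]
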